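/- Let K be a submultiplicative model kernel, φ(ω) = ω + 1, let B ⊂ [0,∞) be a bounded Borel set, and let (μ_t, λ_t)_{t≥0} be the solution of the auxiliary equation (μ_t, λ_t) = (μ₀, λ₀) + ∫₀ᵗ L^B(μ_s, λ_s) ds with μ₀ ≥ 0 supported on B and λ₀ ≥ 0. Then the quantity ⟨φ, μ_t⟩ + λ_t is constant in t: ⟨φ, μ_t⟩ + λ_t = ⟨φ, μ₀⟩ + λ₀ for all t ≥ 0. -/
import Mathlib


open MeasureTheory Set Classical

noncomputable section

/-- `phi ω = ω + 1`. -/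
def phi (ω : ℝ) : ℝ := ω + 1

/-- A model kernel: nonnegative and continuous on `[0,∞)³`, homogeneous of some
degree `λ ≥ 0`, and symmetric in its first two arguments. -/
structure IsModelKernel (K : ℝ → ℝ → ℝ → ℝ) : Prop where
  nonneg : ∀ ω₁ ω₂ ω₃ : ℝ, 0 ≤ ω₁ → 0 ≤ ω₂ → 0 ≤ ω₃ → 0 ≤ K ω₁ ω₂ ω₃
  cont : ContinuousOn (fun p : ℝ × ℝ × ℝ => K p.1 p.2.1 p.2.2)
    {p : ℝ × ℝ × ℝ | 0 ≤ p.1 ∧ 0 ≤ p.2.1 ∧ 0 ≤ p.2.2}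
  homog : ∃ lam : ℝ, 0 ≤ lam ∧ ∀ ξ ω₁ ω₂ ω₃ : ℝ, 0 < ξ → 0 ≤ ω₁ → 0 ≤ ω₂ → 0 ≤ ω₃ →
    K (ξ * ω₁) (ξ * ω₂) (ξ * ω₃) = ξ ^ lam * K ω₁ ω₂ ω₃
  symm : ∀ ω₁ ω₂ ω₃ : ℝ, K ω₁ ω₂ ω₃ = K ω₂ ω₁ ω₃

/-- `K` is submultiplicative. -/
def IsSubmultiplicative (K : ℝ → ℝ → ℝ → ℝ) : Prop :=
  ∀ ω₁ ω₂ ω₃ : ℝ, 0 ≤ ω₁ → 0 ≤ ω₂ → 0 ≤ ω₃ →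
    K ω₁ ω₂ ω₃ ≤ phi ω₁ * phi ω₂ * phi ω₃

/-- Integration of a function against a finite signed measure,
via its Jordan decomposition. -/
def spair (σ : SignedMeasure ℝ) (f : ℝ → ℝ) : ℝ :=
  (∫ ω, f ω ∂σ.toJordanDecomposition.posPart) -
    ∫ ω, f ω ∂σ.toJordanDecomposition.negPart

/-- Integration against the triple product `μ ⊗ ν ⊗ τ` of (nonnegative) measures. -/
def tripleInt (μ ν τ : Measure ℝ) (g : ℝ → ℝ → ℝ → ℝ) : ℝ :=
  ∫ p : ℝ × ℝ × ℝ, g p.1 p.2.1 p.2.2 ∂(μ.prod (ν.prod τ))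

/-- Integration against the triple product `σ ⊗ σ ⊗ σ` of a finite signed measure,
expanded through the Jordan decomposition. -/
def spair3 (σ : SignedMeasure ℝ) (g : ℝ → ℝ → ℝ → ℝ) : ℝ :=
  tripleInt σ.toJordanDecomposition.posPart σ.toJordanDecomposition.posPart
      σ.toJordanDecomposition.posPart g
  - tripleInt σ.toJordanDecomposition.posPart σ.toJordanDecomposition.posPart
      σ.toJordanDecomposition.negPart g
  - tripleInt σ.toJordanDecomposition.posPart σ.toJordanDecomposition.negPart
      σ.toJordanDecomposition.posPart g
  + tripleInt σ.toJordanDecomposition.posPart σ.toJordanDecomposition.negPart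
      σ.toJordanDecomposition.negPart g
  - tripleInt σ.toJordanDecomposition.negPart σ.toJordanDecomposition.posPart
      σ.toJordanDecomposition.posPart g
  + tripleInt σ.toJordanDecomposition.negPart σ.toJordanDecomposition.posPart
      σ.toJordanDecomposition.negPart g
  + tripleInt σ.toJordanDecomposition.negPart σ.toJordanDecomposition.negPart
      σ.toJordanDecomposition.posPart g
  - tripleInt σ.toJordanDecomposition.negPart σ.toJordanDecomposition.negPart
      σ.toJordanDecomposition.negPart g

/-- `⟨(f,a), L^B(μ,λ)⟩`, the pairing defining the operator `L^B`. -/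
def LBpair (K : ℝ → ℝ → ℝ → ℝ) (B : Set ℝ) (μ : SignedMeasure ℝ) (lam : ℝ)
    (f : ℝ → ℝ) (a : ℝ) : ℝ :=
  (1 / 2) * spair3 μ (fun ω₁ ω₂ ω₃ =>
      if 0 ≤ ω₁ ∧ 0 ≤ ω₂ ∧ 0 ≤ ω₃ ∧ ω₃ ≤ ω₁ + ω₂ then
        ((if ω₁ + ω₂ - ω₃ ∈ B then f (ω₁ + ω₂ - ω₃) else a * phi (ω₁ + ω₂ - ω₃))
          + f ω₃ - f ω₁ - f ω₂) * K ω₁ ω₂ ω₃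
      else 0)
  + (lam ^ 2 + 2 * lam * spair μ phi) * spair μ (fun ω => (a * phi ω - f ω) * phi ω)

/-- A (weak, continuous) solution of the auxiliary equation
`(μ_t, λ_t) = (μ₀, lam₀) + ∫₀ᵗ L^B(μ_s, λ_s) ds` on `M_B × ℝ`. -/
structure IsAuxSolution (K : ℝ → ℝ → ℝ → ℝ) (B : Set ℝ)
    (μ₀ : SignedMeasure ℝ) (lam₀ : ℝ)
    (μ : ℝ → SignedMeasure ℝ) (lam : ℝ → ℝ) : Prop where
  supp : ∀ t, 0 ≤ t → ∀ A : Set ℝ, MeasurableSet A → A ⊆ Bᶜ → μ t A = 0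
  contLam : ContinuousOn lam (Set.Ici 0)
  contPair : ∀ f : ℝ → ℝ, Measurable f → (∃ C, ∀ ω, |f ω| ≤ C) →
    ContinuousOn (fun t => spair (μ t) f) (Set.Ici 0)
  eqn : ∀ f : ℝ → ℝ, Measurable f → (∃ C, ∀ ω, |f ω| ≤ C) → ∀ a : ℝ, ∀ t, 0 ≤ t →
    spair (μ t) f + a * lam t =
      spair μ₀ f + a * lam₀ + ∫ s in Set.Ioc (0 : ℝ) t, LBpair K B (μ s) (lam s) f a

lemma jordan_null {σ : SignedMeasure ℝ} {B : Set ℝ} (hB : MeasurableSet B)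
    (h : ∀ A : Set ℝ, MeasurableSet A → A ⊆ Bᶜ → σ A = 0) :
    σ.toJordanDecomposition.posPart Bᶜ = 0 ∧ σ.toJordanDecomposition.negPart Bᶜ = 0 := by
  obtain ⟨i, hi₁, hi₂, hi₃, hp, hn⟩ := σ.toJordanDecomposition_spec
  constructor
  · rw [hp, SignedMeasure.toMeasureOfZeroLE_apply _ hi₂ hi₁ hB.compl]
    have : σ (i ∩ Bᶜ) = 0 := h _ (hi₁.inter hB.compl) inter_subset_right
    simp [this]
  · rw [hn, SignedMeasure.toMeasureOfLEZero_apply _ hi₃ hi₁.compl hB.compl]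
    have : σ (iᶜ ∩ Bᶜ) = 0 := h _ (hi₁.compl.inter hB.compl) inter_subset_right
    simp [this]

lemma int_congr_null {ν : Measure ℝ} {B : Set ℝ} (hν : ν Bᶜ = 0)
    {f g : ℝ → ℝ} (h : ∀ x ∈ B, f x = g x) : ∫ x, f x ∂ν = ∫ x, g x ∂ν := by
  apply integral_congr_ae
  apply (measure_mono_null (fun x hx => ?_) hν)
  intro hxB
  exact hx (h x hxB)

lemma tripleInt_zero {ν₁ ν₂ ν₃ : Measure ℝ} [IsFiniteMeasure ν₁] [IsFiniteMeasure ν₂]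
    [IsFiniteMeasure ν₃] {B : Set ℝ}
    (h1 : ν₁ Bᶜ = 0) (h2 : ν₂ Bᶜ = 0) (h3 : ν₃ Bᶜ = 0)
    {g : ℝ → ℝ → ℝ → ℝ} (hg : ∀ x ∈ B, ∀ y ∈ B, ∀ z ∈ B, g x y z = 0) :
    tripleInt ν₁ ν₂ ν₃ g = 0 := by
  have hnull : (ν₁.prod (ν₂.prod ν₃))
      ((Bᶜ ×ˢ (univ : Set (ℝ × ℝ))) ∪ (univ ×ˢ (Bᶜ ×ˢ univ)) ∪ (univ ×ˢ (univ ×ˢ Bᶜ))) = 0 := by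
    refine measure_union_null (measure_union_null ?_ ?_) ?_
    · rw [Measure.prod_prod, h1, zero_mul]
    · rw [Measure.prod_prod, Measure.prod_prod, h2, zero_mul, mul_zero]
    · rw [Measure.prod_prod, Measure.prod_prod, h3, mul_zero, mul_zero]
  unfold tripleInt
  rw [show (0 : ℝ) = ∫ _ : ℝ × ℝ × ℝ, (0 : ℝ) ∂(ν₁.prod (ν₂.prod ν₃)) by simp]
  apply integral_congr_ae
  refine measure_mono_null (fun p hp => ?_) hnull
  simp only [mem_union, mem_prod, mem_univ, and_true, true_and, mem_compl_iff]
  by_contra hc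
  push_neg at hc
  obtain ⟨⟨h1', h2'⟩, h3'⟩ := hc
  exact hp (hg _ h1' _ h2' _ h3')

/-- Conservation along the auxiliary flow: `⟨φ, μ_t⟩ + λ_t` is constant,
equal to `⟨φ, μ₀⟩ + λ₀`, for any solution of the auxiliary equation with nonnegative
initial data supported on the bounded Borel set `B ⊆ [0,∞)`. -/
theorem aux_solution_phi_conservation
    (K : ℝ → ℝ → ℝ → ℝ) (hK : IsModelKernel K) (hKsub : IsSubmultiplicative K)
    (B : Set ℝ) (hBmeas : MeasurableSet B) (hBbdd : Bornology.IsBounded B)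
    (hBpos : B ⊆ Set.Ici 0)
    (μ₀ : SignedMeasure ℝ) (hμ₀pos : 0 ≤ μ₀)
    (hμ₀supp : ∀ A : Set ℝ, MeasurableSet A → A ⊆ Bᶜ → μ₀ A = 0)
    (lam₀ : ℝ) (hlam₀ : 0 ≤ lam₀)
    (μ : ℝ → SignedMeasure ℝ) (lam : ℝ → ℝ)
    (hsol : IsAuxSolution K B μ₀ lam₀ μ lam) :
    ∀ t, 0 ≤ t → spair (μ t) phi + lam t = spair μ₀ phi + lam₀ := by
  intro t ht
  classical
  set f : ℝ → ℝ := B.indicator phi with hf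
  have hfmeas : Measurable f := ((measurable_id.add_const 1).indicator hBmeas)
  obtain ⟨r, hr⟩ := hBbdd.subset_closedBall 0
  have hbound : ∃ C, ∀ ω, |f ω| ≤ C := by
    refine ⟨|r| + 1, fun ω => ?_⟩
    by_cases hω : ω ∈ B
    · rw [hf, Set.indicator_of_mem hω]
      have h1 : |ω| ≤ r := by
        have := hr hω
        rwa [Metric.mem_closedBall, Real.dist_eq, sub_zero] at this
      calc |phi ω| = |ω + 1| := rfl
        _ ≤ |ω| + 1 := by exact (abs_add_le _ _).trans (by simp)
        _ ≤ |r| + 1 := by have := le_abs_self r; linarith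
    · rw [hf, Set.indicator_of_notMem hω]
      simp only [abs_zero]
      positivity
  have hspair_eq : ∀ σ : SignedMeasure ℝ,
      (∀ A : Set ℝ, MeasurableSet A → A ⊆ Bᶜ → σ A = 0) → spair σ f = spair σ phi := by
    intro σ hσ
    obtain ⟨hp, hn⟩ := jordan_null hBmeas hσ
    unfold spair
    rw [int_congr_null hp (fun x hx => by rw [hf, Set.indicator_of_mem hx]),
      int_congr_null hn (fun x hx => by rw [hf, Set.indicator_of_mem hx])]
  have hLB : ∀ σ : SignedMeasure ℝ, ∀ l : ℝ,
      (∀ A : Set ℝ, MeasurableSet A → A ⊆ Bᶜ → σ A = 0) → LBpair K B σ l f 1 = 0 := by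
    intro σ l hσ
    obtain ⟨hp, hn⟩ := jordan_null hBmeas hσ
    have hg : ∀ x ∈ B, ∀ y ∈ B, ∀ z ∈ B,
        (if 0 ≤ x ∧ 0 ≤ y ∧ 0 ≤ z ∧ z ≤ x + y then
          ((if x + y - z ∈ B then f (x + y - z) else 1 * phi (x + y - z))
            + f z - f x - f y) * K x y z
        else 0) = 0 := by
      intro x hx y hy z hz
      by_cases hcond : 0 ≤ x ∧ 0 ≤ y ∧ 0 ≤ z ∧ z ≤ x + y
      · rw [if_pos hcond]
        have hfx : f x = phi x := by rw [hf, Set.indicator_of_mem hx]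
        have hfy : f y = phi y := by rw [hf, Set.indicator_of_mem hy]
        have hfz : f z = phi z := by rw [hf, Set.indicator_of_mem hz]
        have hbr : (if x + y - z ∈ B then f (x + y - z) else 1 * phi (x + y - z))
            = phi (x + y - z) := by
          by_cases hm : x + y - z ∈ B
          · rw [if_pos hm, hf, Set.indicator_of_mem hm]
          · rw [if_neg hm, one_mul]
        rw [hbr, hfx, hfy, hfz]
        have hz0 : phi (x + y - z) + phi z - phi x - phi y = 0 := by unfold phi; ring
        rw [hz0, zero_mul]
      · rw [if_neg hcond]
    have hsp3 : spair3 σ (fun ω₁ ω₂ ω₃ =>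
        if 0 ≤ ω₁ ∧ 0 ≤ ω₂ ∧ 0 ≤ ω₃ ∧ ω₃ ≤ ω₁ + ω₂ then
          ((if ω₁ + ω₂ - ω₃ ∈ B then f (ω₁ + ω₂ - ω₃) else 1 * phi (ω₁ + ω₂ - ω₃))
            + f ω₃ - f ω₁ - f ω₂) * K ω₁ ω₂ ω₃
        else 0) = 0 := by
      unfold spair3
      rw [tripleInt_zero hp hp hp hg, tripleInt_zero hp hp hn hg,
        tripleInt_zero hp hn hp hg, tripleInt_zero hp hn hn hg,
        tripleInt_zero hn hp hp hg, tripleInt_zero hn hp hn hg,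
        tripleInt_zero hn hn hp hg, tripleInt_zero hn hn hn hg]
      ring
    have hsp2 : spair σ (fun ω => (1 * phi ω - f ω) * phi ω) = 0 := by
      unfold spair
      rw [int_congr_null hp (g := fun _ => (0:ℝ)) (fun x hx => by
          rw [hf, Set.indicator_of_mem hx]; ring),
        int_congr_null hn (g := fun _ => (0:ℝ)) (fun x hx => by
          rw [hf, Set.indicator_of_mem hx]; ring)]
      simp
    unfold LBpair
    rw [hsp3, hsp2]
    ring
  have heqn := hsol.eqn f hfmeas hbound 1 t ht
  have hint : (∫ s in Set.Ioc (0 : ℝ) t, LBpair K B (μ s) (lam s) f 1) = 0 := by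
    rw [setIntegral_congr_fun measurableSet_Ioc
      (fun s hs => hLB (μ s) (lam s) (hsol.supp s (le_of_lt hs.1)))]
    simp
  rw [hint, add_zero, one_mul, one_mul] at heqn
  rw [← hspair_eq (μ t) (hsol.supp t ht), ← hspair_eq μ₀ hμ₀supp]
  exact heqn
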